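/- (Theorem 1, Case 1.) Fix an altitude ĥ > 0 and assume X > 0, SIR1(0,ĥ) < SIR2(0,ĥ), and Ψˣ(ĥ) ≥ D. Then SIR1(x,ĥ) < SIR2(x,ĥ) for every x ∈ [0,D] (so there is no crossing point), and SIR_S(x,ĥ) ≤ SIR_S(0,ĥ) for every x ∈ [0,D]; that is, the optimal horizontal position is x* = 0. -/
import Mathlib


/-- SIR at the UAV located at (x,0,h). -/
noncomputable def SIR1 (pt pM X Y x h : ℝ) : ℝ :=
  pt * ((x - X) ^ 2 + Y ^ 2 + h ^ 2) / (pM * (x ^ 2 + h ^ 2))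

/-- SIR at the Rx when the UAV is located at (x,0,h). -/
noncomputable def SIR2 (pu κ pM D X Y x h : ℝ) : ℝ :=
  pu * κ * (Y ^ 2 + (D - X) ^ 2) / (pM * ((D - x) ^ 2 + h ^ 2))

/-- SIR of the system. -/
noncomputable def SIRS (pt pu κ pM D X Y x h : ℝ) : ℝ :=
  min (SIR1 pt pM X Y x h) (SIR2 pu κ pM D X Y x h)

/-- The horizontal stationary point Ψˣ(h). -/
noncomputable def PsiX (X Y h : ℝ) : ℝ :=
  (X ^ 2 + Y ^ 2 + Real.sqrt ((X ^ 2 + Y ^ 2) ^ 2 + 4 * X ^ 2 * h ^ 2)) / (2 * X)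

theorem stmt6 (D X Y pt pu pM κ : ℝ) (hD : 0 < D) (hX0 : 0 ≤ X) (hXD : X ≤ D)
    (hpt : 0 < pt) (hpu : 0 < pu) (hpM : 0 < pM) (hκ : 0 < κ)
    (hhat : ℝ) (hhat_pos : 0 < hhat) (hX : 0 < X)
    (hc1 : SIR1 pt pM X Y 0 hhat < SIR2 pu κ pM D X Y 0 hhat)
    (hc2 : PsiX X Y hhat ≥ D) :
    ∀ x ∈ Set.Icc (0 : ℝ) D,
      SIR1 pt pM X Y x hhat < SIR2 pu κ pM D X Y x hhat ∧
      SIRS pt pu κ pM D X Y x hhat ≤ SIRS pt pu κ pM D X Y 0 hhat := by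
  intro x hx
  obtain ⟨hx0, hxD⟩ := hx
  have hden1 : 0 < pM * (x ^ 2 + hhat ^ 2) := by positivity
  have hden0 : 0 < pM * ((0:ℝ) ^ 2 + hhat ^ 2) := by positivity
  have hdenx : 0 < pM * ((D - x) ^ 2 + hhat ^ 2) := by positivity
  have h1 : SIR1 pt pM X Y x hhat ≤ SIR1 pt pM X Y 0 hhat := by
    unfold SIR1
    rw [div_le_div_iff₀ hden1 hden0]
    nlinarith [mul_nonneg (mul_nonneg (mul_pos hpt hpM).le (sq_nonneg x)) (add_nonneg (sq_nonneg X) (sq_nonneg Y)),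
      mul_nonneg (mul_nonneg (mul_pos hpt hpM).le (mul_nonneg hX.le hx0)) (sq_nonneg hhat)]
  have h2 : SIR2 pu κ pM D X Y 0 hhat ≤ SIR2 pu κ pM D X Y x hhat := by
    unfold SIR2
    apply div_le_div_of_nonneg_left _ hdenx
    · nlinarith [mul_nonneg hx0 (sub_nonneg.mpr hxD), hpM.le]
    · positivity
  have hlt : SIR1 pt pM X Y x hhat < SIR2 pu κ pM D X Y x hhat :=
    lt_of_le_of_lt h1 (lt_of_lt_of_le hc1 h2)
  refine ⟨hlt, ?_⟩
  unfold SIRS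
  rw [min_eq_left hlt.le, min_eq_left hc1.le]
  exact h1
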